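/- arXiv:0812.2486 — 6 statements merged into one kernel-verified Lean document; each statement's English description precedes it below -/
import Mathlib

section
/- Let L be a group generated by a subgroup K and an element h, with K of cardinality exceeding 2. Assume there is an L-space X with a subset U such that (i) h·U ≠ U, and (ii) for all integers j with h^j ≠ 1 and all g ≠ 1 in K, we have g h^j · U ⊆ U. Then L is isomorphic to the free product K * ⟨h⟩, i.e. the canonical epimorphism from K * ⟨h⟩ to L is injective. -/
open Pointwise

namespace PingPongAux


abbrev fam (M N : Type u) : Bool → Type u := fun b => cond b M N

instance famGroup {M N : Type u} [Group M] [Group N] : ∀ b, Group (fam M N b)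
  | true => ‹Group M›
  | false => ‹Group N›

def famHom {M N : Type u} {P : Type v} [Group M] [Group N] [Monoid P]
    (f : M →* P) (g : N →* P) : ∀ b, fam M N b →* P
  | true => f
  | false => g

variable {M N : Type u} {P : Type v} [Group M] [Group N] [Monoid P]

def toI : Monoid.Coprod M N →* Monoid.CoprodI (fam M N) :=
  Monoid.Coprod.lift (Monoid.CoprodI.of (M := fam M N) (i := true))
    (Monoid.CoprodI.of (M := fam M N) (i := false))

theorem lift_eq (f : M →* P) (g : N →* P) :
    Monoid.Coprod.lift f g = (Monoid.CoprodI.lift (famHom f g)).comp toI := by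
  apply Monoid.Coprod.hom_ext
  · ext x
    show f x = (Monoid.CoprodI.lift (famHom f g)) (toI (Monoid.Coprod.inl x))
    rw [show toI (Monoid.Coprod.inl x) = Monoid.CoprodI.of (M := fam M N) (i := true) x from
      Monoid.Coprod.lift_apply_inl _ _ x, Monoid.CoprodI.lift_of]
    rfl
  · ext x
    show g x = (Monoid.CoprodI.lift (famHom f g)) (toI (Monoid.Coprod.inr x))
    rw [show toI (Monoid.Coprod.inr x) = Monoid.CoprodI.of (M := fam M N) (i := false) x from
      Monoid.Coprod.lift_apply_inr _ _ x, Monoid.CoprodI.lift_of]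
    rfl

theorem toI_injective : Function.Injective (toI (M := M) (N := N)) := by
  have key : (Monoid.CoprodI.lift (famHom (Monoid.Coprod.inl : M →* _)
      (Monoid.Coprod.inr : N →* _))).comp toI = MonoidHom.id _ :=
    (lift_eq _ _).symm.trans Monoid.Coprod.lift_inl_inr
  exact Function.LeftInverse.injective
    (g := Monoid.CoprodI.lift (famHom (Monoid.Coprod.inl : M →* Monoid.Coprod M N)
      (Monoid.Coprod.inr : N →* Monoid.Coprod M N)))
    fun x => DFunLike.congr_fun key x


open Monoid Monoid.CoprodI Subgroup


theorem aux {L : Type u} {X : Type v} [Group L] [MulAction L X]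
    (K : Subgroup L) (h : L)
    (hcard : (2 : Cardinal) < Cardinal.mk K)
    (U : Set X)
    (hU : h • U ≠ U)
    (hmove : ∀ j : ℤ, h ^ j ≠ 1 → ∀ g ∈ K, g ≠ 1 → (g * h ^ j) • U ⊆ U) :
    Function.Injective
      (Monoid.CoprodI.lift (famHom K.subtype (Subgroup.zpowers h).subtype)) := by
  classical
  set F := famHom K.subtype (Subgroup.zpowers h).subtype with hF
  have hFt : ∀ a : ↥K, F true a = (a : L) := fun _ => rfl
  have hFf : ∀ a : ↥(zpowers h), F false a = (a : L) := fun _ => rfl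
  have hh1 : h ≠ 1 := by
    rintro rfl
    exact hU (one_smul _ U)
  -- ping-pong sets
  set Xf : Set X := {x | ∃ s : ℤ, h ^ s ≠ 1 ∧ x ∈ (h ^ s) • U} with hXf
  set Xs : Bool → Set X := fun b => cond b U Xf with hXs
  have hXst : Xs true = U := rfl
  have hXsf : Xs false = Xf := rfl
  have hppTF : ∀ a : ↥K, a ≠ 1 → (a : L) • Xf ⊆ U := by
    intro a ha x hx
    rw [Set.mem_smul_set] at hx
    obtain ⟨y, hy, rfl⟩ := hx
    obtain ⟨s, hs, hy'⟩ := hy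
    rw [Set.mem_smul_set] at hy'
    obtain ⟨u, hu, rfl⟩ := hy'
    have hsub := hmove s hs (↑a) a.2 (by simpa using ha)
    simpa [mul_smul] using hsub (Set.smul_mem_smul_set hu)
  have hppFT : ∀ a : ↥(zpowers h), a ≠ 1 → (a : L) • U ⊆ Xf := by
    intro a ha x hx
    rw [Set.mem_smul_set] at hx
    obtain ⟨u, hu, rfl⟩ := hx
    obtain ⟨s, hs⟩ := Subgroup.mem_zpowers_iff.mp a.2
    refine ⟨s, ?_, ?_⟩
    · rw [hs]; simpa using ha
    · rw [hs]; exact Set.smul_mem_smul_set hu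
  have hpp : Pairwise fun i j => ∀ a : fam ↥K ↥(zpowers h) i, a ≠ 1 → F i a • Xs j ⊆ Xs i := by
    intro i j hij
    cases i <;> cases j
    · exact absurd rfl hij
    · exact fun a ha => hppFT a ha
    · exact fun a ha => hppTF a ha
    · exact absurd rfl hij
  -- the key tool
  have T : ∀ w : NeWord (fam ↥K ↥(zpowers h)) true false,
      CoprodI.lift F w.prod • U ⊆ U := by
    intro w
    exact CoprodI.lift_word_ping_pong F Xs hpp w (k := true) (by simp)
  -- contradiction from both inclusions
  have contra : h • U ⊆ U → h⁻¹ • U ⊆ U → False := by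
    intro h1 h2
    refine hU (Set.Subset.antisymm h1 ?_)
    have := Set.smul_set_mono (a := h) h2
    rwa [smul_inv_smul] at this
  have h3 : (3 : Cardinal) ≤ Cardinal.mk ↥K := by
    have : ((3 : ℕ) : Cardinal) ≤ Cardinal.mk ↥K := by
      rw [show (3 : ℕ) = Nat.succ 2 from rfl, Cardinal.nat_succ, Order.succ_le_iff]
      exact_mod_cast hcard
    simpa using this
  have hz : (⟨h, mem_zpowers h⟩ : ↥(zpowers h)) ≠ 1 := by
    simpa [Subtype.ext_iff] using hh1
  have hzi : (⟨h, mem_zpowers h⟩ : ↥(zpowers h))⁻¹ ≠ 1 := inv_ne_one.mpr hz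
  -- case (true, false)
  have caseTF : ∀ w : NeWord (fam ↥K ↥(zpowers h)) true false,
      CoprodI.lift F w.prod = 1 → False := by
    intro w hw
    obtain ⟨g, hg1, hgh⟩ := Cardinal.three_le h3 (1 : ↥K) (show ↥K from w.head)
    have hgh' : g⁻¹ * (show ↥K from w.head) ≠ 1 := by
      rw [Ne, inv_mul_eq_one]
      exact hgh
    have key : ∀ c : ↥(zpowers h), c ≠ 1 → (c : L) • U ⊆ U := by
      intro c hc
      have hT := T (NeWord.append
        (NeWord.append (NeWord.mulHead w g⁻¹ hgh')
          (by simp) (NeWord.singleton (M := fam ↥K ↥(zpowers h)) (i := true) g hg1))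
        (by simp) (NeWord.singleton (M := fam ↥K ↥(zpowers h)) (i := false) c hc))
      rw [NeWord.append_prod, NeWord.append_prod, NeWord.mulHead_prod,
        NeWord.prod_singleton, NeWord.prod_singleton, map_mul, map_mul, map_mul,
        CoprodI.lift_of, CoprodI.lift_of, CoprodI.lift_of, hw,
        hFt, hFt, hFf] at hT
      simpa using hT
    exact contra (key _ hz) (by simpa using key _ hzi)
  -- case (true, true)
  have caseTT : ∀ w : NeWord (fam ↥K ↥(zpowers h)) true true,
      CoprodI.lift F w.prod = 1 → False := by
    intro w hw
    have key : ∀ c : ↥(zpowers h), c ≠ 1 → (c : L) • U ⊆ U := by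
      intro c hc
      have hT := T (NeWord.append w (by simp) (NeWord.singleton (M := fam ↥K ↥(zpowers h)) (i := false) c hc))
      rw [NeWord.append_prod, NeWord.prod_singleton, map_mul,
        CoprodI.lift_of, hw, hFf] at hT
      simpa using hT
    exact contra (key _ hz) (by simpa using key _ hzi)
  -- all cases
  have allCases : ∀ (i j : Bool) (w : NeWord (fam ↥K ↥(zpowers h)) i j),
      CoprodI.lift F w.prod ≠ 1 := by
    intro i j
    cases i <;> cases j <;> intro w hw
    · -- (false, false)
      obtain ⟨g, hg1, -⟩ := Cardinal.three_le h3 (1 : ↥K) 1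
      refine caseTT (NeWord.append (NeWord.append (NeWord.singleton (M := fam ↥K ↥(zpowers h)) (i := true) g hg1) (by simp) w)
          (by simp) (NeWord.singleton (M := fam ↥K ↥(zpowers h)) (i := true) g⁻¹ (inv_ne_one.mpr hg1))) ?_
      rw [NeWord.append_prod, NeWord.append_prod, NeWord.prod_singleton,
        NeWord.prod_singleton, map_mul, map_mul, CoprodI.lift_of, CoprodI.lift_of,
        hw, hFt, hFt]
      simp
    · -- (false, true)
      refine caseTF w.inv ?_
      rw [NeWord.inv_prod, map_inv, hw, inv_one]
    · -- (true, false)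
      exact caseTF w hw
    · -- (true, true)
      exact caseTT w hw
  -- conclude
  apply (injective_iff_map_eq_one _).mpr
  rw [(CoprodI.Word.equiv).forall_congr_left]
  intro w Heq
  dsimp [Word.equiv] at *
  have hempty : w = Word.empty := by
    by_contra hne
    obtain ⟨i, j, w', rfl⟩ := NeWord.of_word w hne
    exact allCases i j w' Heq
  rw [hempty, Word.prod_empty]


end PingPongAux

/-- Ping-pong lemma: if `L` is generated by a subgroup `K` (of cardinality `> 2`)
together with an element `h`, and there is an `L`-set `X` with a subset `U` such that
`h • U ≠ U` and `(g * h ^ j) • U ⊆ U` whenever `h ^ j ≠ 1` and `1 ≠ g ∈ K`, then the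
canonical homomorphism `K * ⟨h⟩ → L` is injective. -/
theorem stmt0 {L X : Type*} [Group L] [MulAction L X]
    (K : Subgroup L) (h : L)
    (hcard : (2 : Cardinal) < Cardinal.mk K)
    (hgen : Subgroup.closure ((K : Set L) ∪ {h}) = ⊤)
    (U : Set X)
    (hU : h • U ≠ U)
    (hmove : ∀ j : ℤ, h ^ j ≠ 1 → ∀ g ∈ K, g ≠ 1 → (g * h ^ j) • U ⊆ U) :
    Function.Injective
      (Monoid.Coprod.lift K.subtype (Subgroup.zpowers h).subtype) := by
  rw [PingPongAux.lift_eq, MonoidHom.coe_comp]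
  exact (PingPongAux.aux K h hcard U hU hmove).comp PingPongAux.toI_injective
end

section
/- Let Γ be a group in which every element has a finite conjugacy class. Then every finitely generated subgroup of Γ is virtually abelian (contains an abelian subgroup of finite index). -/
/-!
The centralizer of an element with finitely many conjugates is the stabilizer of a finite
orbit of the conjugation action, so it has finite index. If `H` is generated by a finite set
`S`, its centralizer is the intersection of the centralizers of the elements of `S`, hence of
finite index; its intersection with `H` lies in the center of `H`.
-/

namespace Subgroup

variable {G : Type*} [Group G]

theorem finiteIndex_centralizer_singleton {h : G}
    (hfin : (Set.range fun g : G => g * h * g⁻¹).Finite) :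
    (centralizer {h}).FiniteIndex := by
  have horbit : MulAction.orbit (ConjAct G) h = Set.range fun g : G => g * h * g⁻¹ := by
    ext x
    simp only [MulAction.mem_orbit_iff, ConjAct.smul_def, Set.mem_range]
    exact ConjAct.ofConjAct.surjective.exists
  have hindex : (centralizer {h}).index = (MulAction.orbit (ConjAct G) h).ncard := by
    rw [← MulAction.index_stabilizer, centralizer_eq_comap_stabilizer]
    exact index_comap_of_surjective (f := ConjAct.toConjAct.toMonoidHom) _
      ConjAct.toConjAct.surjective
  rw [finiteIndex_iff, hindex, horbit]
  exact ((Set.ncard_pos hfin).mpr (Set.range_nonempty _)).ne'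

theorem FG.finiteIndex_centralizer {H : Subgroup G} (hH : H.FG)
    (hfin : ∀ h ∈ H, (Set.range fun g : G => g * h * g⁻¹).Finite) :
    (centralizer (H : Set G)).FiniteIndex := by
  obtain ⟨S, rfl⟩ := hH
  rw [centralizer_closure, centralizer_eq_iInf]
  exact finiteIndex_iInf' _ fun s hs =>
    finiteIndex_centralizer_singleton (hfin s (subset_closure hs))

theorem centralizer_subgroupOf_le_center (H : Subgroup G) :
    (centralizer (H : Set G)).subgroupOf H ≤ center H := fun _ hx =>
  mem_center_iff.mpr fun y => Subtype.ext (mem_subgroupOf.mp hx y y.2)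

end Subgroup

/-- If every conjugacy class of `Γ` is finite, then every finitely generated
subgroup of `Γ` is virtually abelian. -/
theorem stmt2 {Γ : Type*} [Group Γ]
    (hfc : ∀ h : Γ, (Set.range fun g : Γ => g * h * g⁻¹).Finite)
    (H : Subgroup Γ) (hH : H.FG) :
    ∃ A : Subgroup H, IsMulCommutative A ∧ A.FiniteIndex := by
  have := Subgroup.FG.finiteIndex_centralizer hH fun h _ => hfc h
  exact ⟨Subgroup.center H, inferInstance,
    Subgroup.finiteIndex_of_le (Subgroup.centralizer_subgroupOf_le_center H)⟩
end

section
/- Let h₁, …, h_r be semisimple (diagonalizable) linear automorphisms of finite-dimensional vector spaces E₁, …, E_r over local fields k₁, …, k_r. Then there exists an infinite subset N ⊆ ℕ such that for each i, and for any two eigenvalues λ, μ of h_i of maximal absolute value, (λ⁻¹ μ)^z → 1 as z → ∞ along N. -/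
open Filter

/-- Given semisimple automorphisms `h i` of finite-dimensional vector spaces over
local fields, there is an infinite set `N ⊆ ℕ` such that for each `i` and any two
eigenvalues `lam`, `mu` of `h i` of maximal absolute value, `(lam⁻¹ * mu) ^ z → 1`
as `z → ∞` along `N`. -/
theorem stmt10 {r : ℕ} (k : Fin r → Type*) (E : Fin r → Type*)
    [∀ i, NontriviallyNormedField (k i)] [∀ i, LocallyCompactSpace (k i)]
    [∀ i, AddCommGroup (E i)] [∀ i, Module (k i) (E i)]
    [∀ i, FiniteDimensional (k i) (E i)]
    (h : ∀ i, E i ≃ₗ[k i] E i)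
    (hss : ∀ i, Module.End.IsSemisimple (h i : Module.End (k i) (E i))) :
    ∃ N : Set ℕ, N.Infinite ∧ ∀ i, ∀ lam mu : k i,
      Module.End.HasEigenvalue (h i : Module.End (k i) (E i)) lam →
      Module.End.HasEigenvalue (h i : Module.End (k i) (E i)) mu →
      (∀ ν : k i, Module.End.HasEigenvalue (h i : Module.End (k i) (E i)) ν → ‖ν‖ ≤ ‖lam‖) →
      (∀ ν : k i, Module.End.HasEigenvalue (h i : Module.End (k i) (E i)) ν → ‖ν‖ ≤ ‖mu‖) →
      Tendsto (fun z : ℕ => (lam⁻¹ * mu) ^ z) (atTop ⊓ 𝓟 N) (nhds 1) := by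
  classical
  haveI : ∀ i, ProperSpace (k i) := fun i => ProperSpace.of_locallyCompactSpace (k i) (E := k i)
  -- The set of norm-one ratios of eigenvalues, for each `i`
  set S : ∀ i, Set (k i) := fun i =>
    {u | ‖u‖ = 1 ∧ ∃ l m : k i,
      Module.End.HasEigenvalue (h i : Module.End (k i) (E i)) l ∧
      Module.End.HasEigenvalue (h i : Module.End (k i) (E i)) m ∧ u = l⁻¹ * m} with hSdef
  have hSfin : ∀ i, (S i).Finite := by
    intro i
    have hE : Set.Finite (Module.End.HasEigenvalue ((h i : Module.End (k i) (E i)))) :=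
      Module.End.finite_hasEigenvalue _
    refine Set.Finite.subset (Set.Finite.image2 (fun l m => l⁻¹ * m) hE hE) ?_
    rintro u ⟨-, l, m, hl, hm, rfl⟩
    exact Set.mem_image2_of_mem hl hm
  have hS1 : ∀ i, ∀ u ∈ S i, ‖u‖ = 1 := fun i u hu => hu.1
  -- Package the powers of all these ratios into a sequence in a compact product space
  let T : ∀ i, Finset (k i) := fun i => (hSfin i).toFinset
  let Φ : ℕ → ∀ i, T i → k i := fun n i u => (u : k i) ^ n
  have hmemS : ∀ i (u : T i), (u : k i) ∈ S i := fun i u => (hSfin i).mem_toFinset.mp u.2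
  have hnorm1 : ∀ i (u : T i) (n : ℕ), ‖(u : k i) ^ n‖ = 1 := by
    intro i u n
    rw [norm_pow, hS1 i _ (hmemS i u), one_pow]
  have hΦmem : ∀ n, Φ n ∈ Set.univ.pi
      (fun i => Set.univ.pi (fun _ : T i => Metric.closedBall (0 : k i) 1)) := by
    intro n
    refine Set.mem_univ_pi.2 fun i => Set.mem_univ_pi.2 fun u => ?_
    rw [Metric.mem_closedBall, dist_zero_right, hnorm1]
  have hcomp : IsCompact (Set.univ.pi
      (fun i => Set.univ.pi (fun _ : T i => Metric.closedBall (0 : k i) 1))) :=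
    isCompact_univ_pi fun i => isCompact_univ_pi fun _ => isCompact_closedBall _ _
  obtain ⟨L, -, φ, hφ, hconv⟩ := hcomp.tendsto_subseq hΦmem
  have cauchy : CauchySeq (Φ ∘ φ) := hconv.cauchySeq
  -- strict monotone sequences grow at least linearly
  have hφge : ∀ a b : ℕ, φ a + b ≤ φ (a + b) := by
    intro a b
    induction b with
    | zero => simp
    | succ b ih =>
      have : φ (a + b) < φ (a + (b + 1)) := hφ (by omega)
      omega
  -- key step: arbitrarily large `n` make all the `u ^ n` uniformly close to 1
  have key : ∀ ε > (0 : ℝ), ∀ m0 : ℕ, ∃ n, m0 < n ∧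
      ∀ i, ∀ u ∈ S i, dist (u ^ n) (1 : k i) < ε := by
    intro ε hε m0
    obtain ⟨M, hM⟩ := Metric.cauchySeq_iff.1 cauchy ε hε
    have hab : φ M ≤ φ (M + (m0 + 1)) := hφ.monotone (Nat.le_add_right _ _)
    refine ⟨φ (M + (m0 + 1)) - φ M, ?_, ?_⟩
    · have := hφge M (m0 + 1); omega
    · intro i u hu
      have hu' : u ∈ T i := (hSfin i).mem_toFinset.mpr hu
      have hd : dist (Φ (φ (M + (m0 + 1)))) (Φ (φ M)) < ε :=
        hM _ (Nat.le_add_right _ _) _ le_rfl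
      have hd1 : dist (Φ (φ (M + (m0 + 1))) i) (Φ (φ M) i) ≤
          dist (Φ (φ (M + (m0 + 1)))) (Φ (φ M)) := dist_le_pi_dist _ _ i
      have hd2 : dist (Φ (φ (M + (m0 + 1))) i ⟨u, hu'⟩) (Φ (φ M) i ⟨u, hu'⟩) ≤
          dist (Φ (φ (M + (m0 + 1))) i) (Φ (φ M) i) := dist_le_pi_dist _ _ _
      have hdist : dist (u ^ φ (M + (m0 + 1))) (u ^ φ M) < ε :=
        lt_of_le_of_lt (hd2.trans hd1) hd
      have hnu : ‖u ^ φ M‖ = 1 := by rw [norm_pow, hS1 i u hu, one_pow]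
      have heq : dist (u ^ (φ (M + (m0 + 1)) - φ M)) (1 : k i) =
          dist (u ^ φ (M + (m0 + 1))) (u ^ φ M) := by
        rw [dist_eq_norm, dist_eq_norm]
        calc ‖u ^ (φ (M + (m0 + 1)) - φ M) - 1‖
            = ‖u ^ (φ (M + (m0 + 1)) - φ M) - 1‖ * ‖u ^ φ M‖ := by rw [hnu, mul_one]
          _ = ‖(u ^ (φ (M + (m0 + 1)) - φ M) - 1) * u ^ φ M‖ := (norm_mul _ _).symm
          _ = ‖u ^ φ (M + (m0 + 1)) - u ^ φ M‖ := by
              rw [sub_mul, one_mul, pow_sub_mul_pow u hab]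
      rw [heq]
      exact hdist
  -- build a strictly monotone sequence with quantitative closeness
  have key' : ∀ c m0 : ℕ, ∃ n, m0 < n ∧
      ∀ i, ∀ u ∈ S i, dist (u ^ n) (1 : k i) < 1 / (c + 1 : ℝ) := by
    intro c m0
    exact key (1 / (c + 1 : ℝ)) (by positivity) m0
  choose g hg1 hg2 using key'
  set f : ℕ → ℕ := fun c => Nat.rec (g 0 0) (fun c ih => g (c + 1) ih) c with hfdef
  have hfmono : StrictMono f := strictMono_nat_of_lt_succ fun n => hg1 (n + 1) (f n)
  have hfprop : ∀ c, ∀ i, ∀ u ∈ S i, dist (u ^ f c) (1 : k i) < 1 / (c + 1 : ℝ) := by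
    intro c
    cases c with
    | zero => exact hg2 0 0
    | succ c => exact hg2 (c + 1) (f c)
  refine ⟨Set.range f, Set.infinite_range_of_injective hfmono.injective, ?_⟩
  intro i lam mu hl hm hlmax hmmax
  -- eigenvalues of an automorphism are nonzero
  have hlam_ne : lam ≠ 0 := by
    intro h0
    obtain ⟨v, hv⟩ := hl.exists_hasEigenvector
    have hv0 : (h i : Module.End (k i) (E i)) v = 0 := by
      rw [hv.apply_eq_smul, h0, zero_smul]
    have : v = 0 := by
      have := (h i).map_eq_zero_iff.mp (by simpa using hv0)
      exact this
    exact hv.2 this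
  have hnn : ‖lam‖ = ‖mu‖ := le_antisymm (hmmax lam hl) (hlmax mu hm)
  have hlamnorm : ‖lam‖ ≠ 0 := norm_ne_zero_iff.mpr hlam_ne
  have huS : lam⁻¹ * mu ∈ S i := by
    refine ⟨?_, lam, mu, hl, hm, rfl⟩
    rw [norm_mul, norm_inv, ← hnn, inv_mul_cancel₀ hlamnorm]
  rw [Metric.tendsto_nhds]
  intro ε hε
  obtain ⟨K, hK⟩ := exists_nat_one_div_lt hε
  rw [eventually_inf_principal]
  filter_upwards [eventually_ge_atTop (f K)] with z hz hzN
  obtain ⟨c, rfl⟩ := hzN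
  have hcK : K ≤ c := hfmono.le_iff_le.mp hz
  calc dist ((lam⁻¹ * mu) ^ f c) (1 : k i) < 1 / (c + 1 : ℝ) := hfprop c i _ huS
    _ ≤ 1 / (K + 1 : ℝ) := by
        apply one_div_le_one_div_of_le (by positivity)
        exact_mod_cast Nat.succ_le_succ hcK
    _ < ε := hK
end

section
/- Let Δ be an irreducible reduced root system of simply laced type and rank at least 2, with Weyl group W, and let D be a linear hyperplane in the span of Δ. Then W cannot stabilize the union D ∪ D⊥; in particular there exist w ∈ W and a root α with w·α ∉ D ∪ D⊥. -/
open scoped RealInnerProductSpace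

/-- A (reduced, crystallographic) root system `Δ` in a real inner product space. -/
structure IsRootSystem (V : Type*) [NormedAddCommGroup V] [InnerProductSpace ℝ V]
    (Δ : Set V) : Prop where
  finite : Δ.Finite
  span_top : Submodule.span ℝ Δ = ⊤
  zero_not_mem : (0 : V) ∉ Δ
  reflection_mem : ∀ α ∈ Δ, ∀ β ∈ Δ, β - (2 * ⟪β, α⟫ / ⟪α, α⟫) • α ∈ Δ
  integral : ∀ α ∈ Δ, ∀ β ∈ Δ, ∃ z : ℤ, 2 * ⟪β, α⟫ / ⟪α, α⟫ = (z : ℝ)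
  reduced : ∀ α ∈ Δ, ∀ c : ℝ, c • α ∈ Δ → c = 1 ∨ c = -1

/-- The reflections in the roots belonging to `Δ`, as linear automorphisms. -/
def weylReflections (V : Type*) [NormedAddCommGroup V] [InnerProductSpace ℝ V]
    (Δ : Set V) : Set (V ≃ₗ[ℝ] V) :=
  {f | ∃ α ∈ Δ, ∀ v : V, f v = v - (2 * ⟪v, α⟫ / ⟪α, α⟫) • α}

/-!
A linear map sending `D ∪ Dᗮ` into itself sends the subspace `D` into `D` or into `Dᗮ`.
In rank at least `3` the second option is excluded by dimension, so the reflection in a root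
`α ∉ D ∪ Dᗮ` (such a root exists by irreducibility) would preserve `D`, which forces `α ∈ D` or
`α ⊥ D`. In rank `2`, write `D = ℝ d` and `Dᗮ = ℝ u` with `d, u` orthonormal: the reflection in
a root `γ` sends `u` into `D ∪ Dᗮ` only if `γ` lies on one of the four lines `ℝ d`, `ℝ u`,
`ℝ (d ± u)`. An irreducible simply laced root system of rank `2` has two roots at angle `π/3` or
`2π/3`, and no two vectors of equal length at such an angle lie on these four lines.
-/

open Set Submodule

section Reflection

variable {V : Type*} [NormedAddCommGroup V] [InnerProductSpace ℝ V]

theorem reflection_orthogonal_span_singleton_apply (α v : V) :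
    reflection (ℝ ∙ α)ᗮ v = v - (2 * ⟪v, α⟫ / ⟪α, α⟫) • α := by
  rw [reflection_orthogonal_apply, reflection_singleton_apply, real_inner_self_eq_norm_sq,
    real_inner_comm]
  simp only [RCLike.ofReal_real_eq_id, id]
  module

theorem mem_or_mem_orthogonal_of_mapsTo_reflection {D : Submodule ℝ V} {α : V}
    (h : MapsTo (reflection (ℝ ∙ α)ᗮ) D D) : α ∈ D ∨ α ∈ Dᗮ := by
  refine or_iff_not_imp_left.2 fun hα x hx => ?_
  have hsmul : (2 * ⟪x, α⟫ / ⟪α, α⟫) • α ∈ D := by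
    simpa [reflection_orthogonal_span_singleton_apply] using D.sub_mem hx (h hx)
  have hαα : ⟪α, α⟫ ≠ 0 := by
    rw [inner_self_ne_zero]
    rintro rfl
    exact hα D.zero_mem
  by_contra hxα
  exact hα ((smul_mem_iff D (div_ne_zero (mul_ne_zero two_ne_zero hxα) hαα)).1 hsmul)

theorem mem_or_mem_orthogonal_of_mapsTo_reflection_union [FiniteDimensional ℝ V]
    {D : Submodule ℝ V} {α : V} (hD : Module.finrank ℝ Dᗮ < Module.finrank ℝ D)
    (h : MapsTo (reflection (ℝ ∙ α)ᗮ) D ((D : Set V) ∪ Dᗮ)) : α ∈ D ∨ α ∈ Dᗮ := by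
  set s := (reflection (ℝ ∙ α)ᗮ).toLinearEquiv
  rcases (AddSubgroupClass.subset_union (H := D) (K := D.comap s.toLinearMap)
    (L := Dᗮ.comap s.toLinearMap)).1 fun x hx => h hx with hle | hle
  · exact mem_or_mem_orthogonal_of_mapsTo_reflection hle
  · have hrank := Submodule.finrank_mono hle
    rw [Submodule.comap_equiv_eq_map_symm, LinearEquiv.finrank_map_eq] at hrank
    omega

theorem Orthonormal.inner_eq_sum_inner_mul_inner [FiniteDimensional ℝ V] {ι : Type*}
    [Fintype ι] {v : ι → V} (hv : Orthonormal ℝ v) (hcard : Fintype.card ι = Module.finrank ℝ V)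
    (x y : V) : ⟪x, y⟫ = ∑ i, ⟪v i, x⟫ * ⟪v i, y⟫ := by
  let b := OrthonormalBasis.mk hv (hv.linearIndependent.span_eq_top_of_card_eq_finrank' hcard).ge
  simpa [b, real_inner_comm x] using (b.sum_inner_mul_inner x y).symm

theorem Submodule.exists_mem_norm_eq_one {K : Submodule ℝ V} (hK : K ≠ ⊥) :
    ∃ v ∈ K, ‖v‖ = 1 := by
  obtain ⟨v, hvK, hv⟩ := K.exists_mem_ne_zero_of_ne_bot hK
  exact ⟨‖v‖⁻¹ • v, K.smul_mem _ hvK, norm_smul_inv_norm hv⟩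

end Reflection

/-- `a * b * (a ^ 2 - b ^ 2) = 0` says that `(a, b)` lies on one of the four lines at angles
multiple of `π/4`, and `hinner` that `(a, b)` and `(c, e)` make an angle `π/3` or `2π/3`. -/
theorem not_sixty_degrees_on_octant_lines {a b c e : ℝ} (hab : a * b * (a ^ 2 - b ^ 2) = 0)
    (hce : c * e * (c ^ 2 - e ^ 2) = 0) (hnorm : a ^ 2 + b ^ 2 = c ^ 2 + e ^ 2)
    (hinner : 4 * (a * c + b * e) ^ 2 = (a ^ 2 + b ^ 2) ^ 2) (hpos : a ^ 2 + b ^ 2 ≠ 0) :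
    False := by
  have hpos' : 0 < a ^ 2 + b ^ 2 := by positivity
  simp only [mul_eq_zero, sub_eq_zero, sq_eq_sq_iff_eq_or_eq_neg] at hab hce
  rcases hab with (rfl | rfl) | rfl | rfl <;> rcases hce with (rfl | rfl) | rfl | rfl
  all_goals nlinarith

def IsIndecomposable {V : Type*} [NormedAddCommGroup V] [InnerProductSpace ℝ V] (Δ : Set V) :
    Prop :=
  ∀ Δ₁ Δ₂ : Set V, Δ = Δ₁ ∪ Δ₂ → (∀ α ∈ Δ₁, ∀ β ∈ Δ₂, ⟪α, β⟫ = 0) → Δ₁ = ∅ ∨ Δ₂ = ∅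

namespace IsRootSystem

variable {V : Type*} [NormedAddCommGroup V] [InnerProductSpace ℝ V] {Δ : Set V}

theorem reflection_mem_closure_weylReflections {α : V} (hα : α ∈ Δ) :
    (reflection (ℝ ∙ α)ᗮ).toLinearEquiv ∈ Subgroup.closure (weylReflections V Δ) :=
  Subgroup.subset_closure ⟨α, hα, reflection_orthogonal_span_singleton_apply α⟩

theorem ne_zero (hRS : IsRootSystem V Δ) {α : V} (hα : α ∈ Δ) : α ≠ 0 :=
  fun h => hRS.zero_not_mem (h ▸ hα)

theorem eq_top_of_subset (hRS : IsRootSystem V Δ) {K : Submodule ℝ V} (h : Δ ⊆ K) : K = ⊤ :=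
  eq_top_iff.2 (hRS.span_top ▸ span_le.2 h)

theorem not_subset_span_singleton [FiniteDimensional ℝ V] (hRS : IsRootSystem V Δ)
    (hrank : 2 ≤ Module.finrank ℝ V) (v : V) : ¬ Δ ⊆ ℝ ∙ v := fun h => by
  have hle := finrank_span_le_card (R := ℝ) ({v} : Set V)
  rw [hRS.eq_top_of_subset h, finrank_top] at hle
  simp only [toFinset_singleton, Finset.card_singleton] at hle
  omega

theorem exists_notMem_union_orthogonal (hRS : IsRootSystem V Δ) (hirr : IsIndecomposable Δ)
    {D : Submodule ℝ V} (hbot : D ≠ ⊥) (htop : D ≠ ⊤) :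
    ∃ α ∈ Δ, α ∉ (D : Set V) ∪ Dᗮ := by
  by_contra! hΔ
  have horth : ∀ α ∈ Δ ∩ D, ∀ β ∈ Δ \ D, ⟪α, β⟫ = 0 := fun α hα β hβ =>
    inner_right_of_mem_orthogonal hα.2 ((hΔ β hβ.1).resolve_left hβ.2)
  rcases hirr _ _ (inter_union_sdiff Δ D).symm horth with h | h
  · refine hbot ((orthogonal_eq_top_iff D).1 (hRS.eq_top_of_subset fun β hβ => ?_))
    exact (hΔ β hβ).resolve_left fun hβD => h.subset ⟨hβ, hβD⟩
  · exact htop (hRS.eq_top_of_subset (sdiff_eq_empty.1 h))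

theorem exists_notMem_span_singleton_inner_ne_zero [FiniteDimensional ℝ V]
    (hRS : IsRootSystem V Δ) (hirr : IsIndecomposable Δ) (hrank : 2 ≤ Module.finrank ℝ V) :
    ∃ α ∈ Δ, ∃ β ∈ Δ, β ∉ ℝ ∙ α ∧ ⟪α, β⟫ ≠ 0 := by
  obtain ⟨α, hα, -⟩ := not_subset_iff_exists_mem_notMem.1 (hRS.not_subset_span_singleton hrank 0)
  by_contra! hΔ
  have horth : ∀ x ∈ Δ ∩ (ℝ ∙ α), ∀ β ∈ Δ \ (ℝ ∙ α), ⟪x, β⟫ = 0 := by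
    rintro x ⟨-, hx⟩ β ⟨hβ, hβα⟩
    obtain ⟨c, rfl⟩ := mem_span_singleton.1 hx
    rw [real_inner_smul_left, hΔ α hα β hβ hβα, mul_zero]
  rcases hirr _ _ (inter_union_sdiff Δ (ℝ ∙ α)).symm horth with h | h
  · exact h.subset ⟨hα, mem_span_singleton_self α⟩
  · exact hRS.not_subset_span_singleton hrank α (sdiff_eq_empty.1 h)

theorem four_mul_inner_sq_eq_inner_self_sq (hRS : IsRootSystem V Δ) {α β : V} (hα : α ∈ Δ)
    (hβ : β ∈ Δ) (hnorm : ‖α‖ = ‖β‖) (hβα : β ∉ ℝ ∙ α) (hne : ⟪α, β⟫ ≠ 0) :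
    4 * ⟪α, β⟫ ^ 2 = ⟪α, α⟫ ^ 2 := by
  have hN : 0 < ⟪α, α⟫ := real_inner_self_pos.2 (hRS.ne_zero hα)
  have hlt : |⟪α, β⟫| < ⟪α, α⟫ := by
    rw [real_inner_self_eq_norm_mul_norm]
    nth_rewrite 2 [hnorm]
    refine (abs_real_inner_le_norm α β).lt_of_ne fun h => hβα ?_
    obtain ⟨r, -, rfl⟩ :=
      (norm_inner_eq_norm_iff (𝕜 := ℝ) (hRS.ne_zero hα) (hRS.ne_zero hβ)).1 (by simpa using h)
    exact smul_mem _ r (mem_span_singleton_self α)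
  obtain ⟨z, hz⟩ := hRS.integral α hα β hβ
  rw [real_inner_comm, div_eq_iff hN.ne'] at hz
  have hz_ne : z ≠ 0 := by
    rintro rfl
    simp [hne] at hz
  have hz_lt : |(z : ℝ)| < 2 := by
    rw [abs_lt] at hlt ⊢
    constructor <;> nlinarith
  have hz_unit : z = 1 ∨ z = -1 := by
    have : |z| < 2 := by exact_mod_cast hz_lt
    rw [abs_lt] at this
    omega
  rcases hz_unit with rfl | rfl <;> push_cast at hz
  · linear_combination (2 * ⟪α, β⟫ + ⟪α, α⟫) * hz
  · linear_combination (2 * ⟪α, β⟫ - ⟪α, α⟫) * hz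

theorem not_forall_mapsTo_reflection_of_finrank_eq_two [FiniteDimensional ℝ V]
    (hRS : IsRootSystem V Δ) (hirr : IsIndecomposable Δ)
    (hsl : ∀ α ∈ Δ, ∀ β ∈ Δ, ‖α‖ = ‖β‖) (hV : Module.finrank ℝ V = 2)
    {D : Submodule ℝ V} (hbot : D ≠ ⊥) (htop : D ≠ ⊤) :
    ¬ ∀ γ ∈ Δ, MapsTo (reflection (ℝ ∙ γ)ᗮ) ((D : Set V) ∪ Dᗮ) ((D : Set V) ∪ Dᗮ) := by
  intro hmaps
  obtain ⟨d, hdD, hd⟩ := exists_mem_norm_eq_one hbot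
  obtain ⟨u, huD, hu⟩ := exists_mem_norm_eq_one (K := Dᗮ) (by rwa [Ne, orthogonal_eq_bot_iff])
  have hdu : ⟪d, u⟫ = 0 := inner_right_of_mem_orthogonal hdD huD
  have huu : ⟪u, u⟫ = 1 := by rw [real_inner_self_eq_norm_sq, hu, one_pow]
  have hon : Orthonormal ℝ ![d, u] := by
    simp [orthonormal_iff_ite, Fin.forall_fin_two, hd, hu, hdu, real_inner_comm d u]
  have hinner (x y : V) : ⟪x, y⟫ = ⟪d, x⟫ * ⟪d, y⟫ + ⟪u, x⟫ * ⟪u, y⟫ := by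
    simpa [Fin.sum_univ_two] using hon.inner_eq_sum_inner_mul_inner (by simp [hV]) x y
  have hoct : ∀ γ ∈ Δ, ⟪d, γ⟫ * ⟪u, γ⟫ * (⟪d, γ⟫ ^ 2 - ⟪u, γ⟫ ^ 2) = 0 := by
    intro γ hγ
    have hγγ : ⟪γ, γ⟫ ≠ 0 := inner_self_ne_zero.2 (hRS.ne_zero hγ)
    rcases hmaps γ hγ (Or.inr huD) with h | h
    · have h' := inner_right_of_mem_orthogonal h huD
      rw [reflection_orthogonal_span_singleton_apply, inner_sub_left, real_inner_smul_left] at h'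
      field_simp at h'
      rw [huu, real_inner_comm u γ] at h'
      linear_combination (⟪d, γ⟫ * ⟪u, γ⟫) * (h' - hinner γ γ)
    · have h' := inner_right_of_mem_orthogonal hdD h
      rw [reflection_orthogonal_span_singleton_apply, inner_sub_right, real_inner_smul_right] at h'
      field_simp at h'
      rw [hdu] at h'
      linear_combination (-(⟪d, γ⟫ ^ 2 - ⟪u, γ⟫ ^ 2) / 2) * h'
  obtain ⟨α, hα, β, hβ, hβα, hne⟩ := hRS.exists_notMem_span_singleton_inner_ne_zero hirr hV.ge
  have h4 := hRS.four_mul_inner_sq_eq_inner_self_sq hα hβ (hsl α hα β hβ) hβα hne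
  have hαβ : ⟪α, α⟫ = ⟪β, β⟫ := by
    rw [real_inner_self_eq_norm_sq, real_inner_self_eq_norm_sq, hsl α hα β hβ]
  have hαα : ⟪α, α⟫ ≠ 0 := inner_self_ne_zero.2 (hRS.ne_zero hα)
  rw [hinner α β, hinner α α] at h4
  rw [hinner α α, hinner β β] at hαβ
  exact not_sixty_degrees_on_octant_lines (hoct α hα) (hoct β hβ) (by linear_combination hαβ)
    (by linear_combination h4) (by simpa only [hinner α α, sq] using hαα)

end IsRootSystem

/-- The Weyl group of an irreducible, reduced, simply laced root system of rank
at least `2` cannot stabilize `D ∪ D⊥` for a hyperplane `D`; in particular some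
Weyl image of some root lies outside `D ∪ D⊥`. -/
theorem stmt12 {V : Type*} [NormedAddCommGroup V] [InnerProductSpace ℝ V]
    [FiniteDimensional ℝ V] (Δ : Set V) (hRS : IsRootSystem V Δ)
    (hirr : ∀ Δ₁ Δ₂ : Set V, Δ = Δ₁ ∪ Δ₂ →
      (∀ α ∈ Δ₁, ∀ β ∈ Δ₂, ⟪α, β⟫ = 0) → Δ₁ = ∅ ∨ Δ₂ = ∅)
    (hsl : ∀ α ∈ Δ, ∀ β ∈ Δ, ‖α‖ = ‖β‖)
    (hrank : 2 ≤ Module.finrank ℝ V)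
    (D : Submodule ℝ V) (hD : Module.finrank ℝ D = Module.finrank ℝ V - 1) :
    (¬ ∀ w ∈ Subgroup.closure (weylReflections V Δ),
        (w : V ≃ₗ[ℝ] V) '' ((D : Set V) ∪ (Dᗮ : Set V)) = (D : Set V) ∪ (Dᗮ : Set V)) ∧
    ∃ w ∈ Subgroup.closure (weylReflections V Δ), ∃ α ∈ Δ,
      (w : V ≃ₗ[ℝ] V) α ∉ (D : Set V) ∪ (Dᗮ : Set V) := by
  have hD_top : D ≠ ⊤ := by rintro rfl; rw [finrank_top] at hD; omega
  have hD_bot : D ≠ ⊥ := by rintro rfl; rw [finrank_bot] at hD; omega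
  obtain ⟨α, hα, hαD⟩ := hRS.exists_notMem_union_orthogonal hirr hD_bot hD_top
  refine ⟨fun hW => ?_, 1, one_mem _, α, hα, hαD⟩
  have hmaps (γ : V) (hγ : γ ∈ Δ) :
      MapsTo (reflection (ℝ ∙ γ)ᗮ) ((D : Set V) ∪ Dᗮ) ((D : Set V) ∪ Dᗮ) :=
    mapsTo_iff_image_subset.2 (hW _ (IsRootSystem.reflection_mem_closure_weylReflections hγ)).le
  rcases hrank.eq_or_lt with hV | hV
  · exact hRS.not_forall_mapsTo_reflection_of_finrank_eq_two hirr hsl hV.symm hD_bot hD_top hmaps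
  · have hDD : Module.finrank ℝ Dᗮ < Module.finrank ℝ D := by
      have := D.finrank_add_finrank_orthogonal
      omega
    exact hαD (mem_or_mem_orthogonal_of_mapsTo_reflection_union hDD
      ((hmaps α hα).mono_left subset_union_left))
end

section
/- Let G = SL₂(ℂ) (or any rank-one simple group), and let E be an irreducible finite-dimensional G-module of dimension n. Fix m < n. For any nonzero vector k ∈ E and any irreducible G-submodule E₀ of the m-fold exterior power Λ^m E, the linear map x ↦ x ∧ k from Λ^m E to Λ^{m+1} E does not annihilate E₀. -/
/-!
The vectors `v` with `E₀ ∧ v = 0` form a `G`-stable subspace of `E`, because `E₀` is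
`G`-stable; it contains `k ≠ 0`, so by irreducibility of `E` it is all of `E`. But an
`m`-vector `x` killed by wedging with `m + 1` basis vectors `e₀, …, eₘ` vanishes when `m < n`:
contracting `x ∧ eₘ = 0` with the coordinate functional of `eₘ` gives `x = (x ⌊ eₘ*) ∧ eₘ`,
and the `(m - 1)`-vector `x ⌊ eₘ*` is killed by `e₀, …, eₘ₋₁`, so it vanishes by induction.
-/

open ExteriorAlgebra

namespace ExteriorAlgebra

variable {R M : Type*} [CommRing R] [AddCommGroup M] [Module R M]

theorem contractRight_mem_exteriorPower (d : Module.Dual R M) {i : ℕ} {x : ExteriorAlgebra R M}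
    (hx : x ∈ ⋀[R]^(i + 1) M) : CliffordAlgebra.contractRight x d ∈ ⋀[R]^i M := by
  induction i generalizing x with
  | zero =>
    obtain ⟨v, rfl⟩ : ∃ v, ι R v = x := by simpa using hx
    rw [CliffordAlgebra.contractRight_ι, exteriorPower, pow_zero]
    exact Submodule.algebraMap_mem _
  | succ i ih =>
    rw [exteriorPower, pow_succ] at hx
    refine Submodule.mul_induction_on hx (fun a ha w hw => ?_) fun a b ha hb => ?_
    · obtain ⟨v, rfl⟩ := LinearMap.mem_range.mp hw
      rw [CliffordAlgebra.contractRight_mul_ι]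
      refine sub_mem (Submodule.smul_mem _ _ ha) ?_
      rw [exteriorPower, pow_succ]
      exact Submodule.mul_mem_mul (ih ha) (LinearMap.mem_range_self _ v)
    · rw [map_add, LinearMap.add_apply]
      exact add_mem ha hb

theorem contractRight_eq_zero_of_mem_exteriorPower_zero (d : Module.Dual R M)
    {x : ExteriorAlgebra R M} (hx : x ∈ ⋀[R]^0 M) : CliffordAlgebra.contractRight x d = 0 := by
  obtain ⟨r, rfl⟩ := Submodule.mem_one.mp (by simpa using hx)
  exact CliffordAlgebra.contractRight_algebraMap _ d r

theorem contractRight_mul_ι_of_mul_ι_eq_zero (d : Module.Dual R M) {x : ExteriorAlgebra R M}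
    {v : M} (hxv : x * ι R v = 0) : CliffordAlgebra.contractRight x d * ι R v = d v • x := by
  have h := congrArg (CliffordAlgebra.contractRight · d) hxv
  simp only [CliffordAlgebra.contractRight_mul_ι, map_zero, LinearMap.zero_apply] at h
  exact (sub_eq_zero.mp h).symm

theorem eq_contractRight_mul_ι_of_mul_ι_eq_zero (d : Module.Dual R M) {x : ExteriorAlgebra R M}
    {v : M} (hxv : x * ι R v = 0) (hdv : d v = 1) :
    x = CliffordAlgebra.contractRight x d * ι R v := by
  rw [contractRight_mul_ι_of_mul_ι_eq_zero d hxv, hdv, one_smul]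

theorem eq_zero_of_mul_ι_basis_eq_zero {ι' : Type*} (b : Module.Basis ι' R M) {m : ℕ}
    {x : ExteriorAlgebra R M} (hx : x ∈ ⋀[R]^m M) (g : Fin (m + 1) ↪ ι')
    (hxg : ∀ j, x * ι R (b (g j)) = 0) : x = 0 := by
  classical
  induction m generalizing x with
  | zero =>
    rw [eq_contractRight_mul_ι_of_mul_ι_eq_zero (b.coord (g 0)) (hxg 0) (by simp),
      contractRight_eq_zero_of_mem_exteriorPower_zero _ hx, zero_mul]
  | succ m ih =>
    set d := b.coord (g (Fin.last (m + 1)))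
    have hdj (j : Fin (m + 1)) : d (b (g j.castSucc)) = 0 := by
      simp [d, g.injective.ne (Fin.castSucc_lt_last j).ne']
    have hy : CliffordAlgebra.contractRight x d = 0 :=
      ih (contractRight_mem_exteriorPower d hx) (Fin.castSuccEmb.trans g) fun j => by
        simpa [hdj] using contractRight_mul_ι_of_mul_ι_eq_zero d (hxg j.castSucc)
    rw [eq_contractRight_mul_ι_of_mul_ι_eq_zero d (hxg (Fin.last _)) (by simp [d]), hy,
      zero_mul]

theorem eq_zero_of_forall_mul_ι_eq_zero [Nontrivial R] [Module.Free R M] [Module.Finite R M]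
    {m : ℕ} (hm : m < Module.finrank R M) {x : ExteriorAlgebra R M} (hx : x ∈ ⋀[R]^m M)
    (hxv : ∀ v, x * ι R v = 0) : x = 0 :=
  eq_zero_of_mul_ι_basis_eq_zero (Module.finBasis R M) hx (Fin.castLEEmb hm) fun _ => hxv _

def rightAnnihilator (S : Submodule R (ExteriorAlgebra R M)) : Submodule R M :=
  ⨅ x ∈ S, LinearMap.ker (LinearMap.mulLeft R x ∘ₗ ι R)

theorem mem_rightAnnihilator {S : Submodule R (ExteriorAlgebra R M)} {v : M} :
    v ∈ rightAnnihilator S ↔ ∀ x ∈ S, x * ι R v = 0 := by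
  simp [rightAnnihilator]

theorem map_rightAnnihilator_le {N : Type*} [AddCommGroup N] [Module R N] (f : M →ₗ[R] N)
    {S : Submodule R (ExteriorAlgebra R M)} {T : Submodule R (ExteriorAlgebra R N)}
    (hT : T ≤ S.map (ExteriorAlgebra.map f).toLinearMap) :
    (rightAnnihilator S).map f ≤ rightAnnihilator T := by
  rintro _ ⟨v, hv, rfl⟩
  rw [SetLike.mem_coe, mem_rightAnnihilator] at hv
  rw [mem_rightAnnihilator]
  intro x hx
  obtain ⟨y, hy, rfl⟩ := hT hx
  rw [AlgHom.toLinearMap_apply, ← map_apply_ι, ← map_mul, hv y hy, map_zero]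

end ExteriorAlgebra

namespace Representation

variable {k G V : Type*} [CommSemiring k] [Group G] [AddCommMonoid V] [Module k V]

theorem map_eq_of_forall_map_le (ρ : Representation k G V) {W : Submodule k V}
    (hW : ∀ g, W.map (ρ g) ≤ W) (g : G) : W.map (ρ g) = W := by
  refine (hW g).antisymm ?_
  calc W = (W.map (ρ g⁻¹)).map (ρ g) := by
        rw [← Submodule.map_comp, ← Module.End.mul_eq_comp, ← map_mul, mul_inv_cancel,
          map_one, Module.End.one_eq_id, Submodule.map_id]
    _ ≤ W.map (ρ g) := Submodule.map_mono (hW g⁻¹)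

end Representation

theorem stmt15_general {E : Type*} [AddCommGroup E] [Module ℂ E] [FiniteDimensional ℂ E]
    {n : ℕ} (hn : Module.finrank ℂ E = n)
    (ρ : Representation ℂ (Matrix.SpecialLinearGroup (Fin 2) ℂ) E)
    (hirr : ∀ W : Submodule ℂ E,
      (∀ g, W.map (ρ g) = W) → W = ⊥ ∨ W = ⊤)
    (m : ℕ) (hm : m < n)
    (E₀ : Submodule ℂ (ExteriorAlgebra ℂ E)) (hE₀m : E₀ ≤ ⋀[ℂ]^m E)
    (hE₀inv : ∀ g, E₀.map (ExteriorAlgebra.map (ρ g)).toLinearMap = E₀)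
    (hE₀ne : E₀ ≠ ⊥)
    (kvec : E) (hk : kvec ≠ 0) :
    ∃ x ∈ E₀, x * ExteriorAlgebra.ι ℂ kvec ≠ 0 := by
  obtain ⟨x, hxE₀, hx⟩ := Submodule.exists_mem_ne_zero_of_ne_bot hE₀ne
  by_contra! hE₀k
  have hkW : kvec ∈ rightAnnihilator E₀ := mem_rightAnnihilator.mpr hE₀k
  have hW : rightAnnihilator E₀ = ⊤ := by
    refine (hirr _ (ρ.map_eq_of_forall_map_le fun g => ?_)).resolve_left fun hbot => ?_
    · exact map_rightAnnihilator_le (ρ g) (hE₀inv g).ge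
    · exact hk ((Submodule.mem_bot ℂ).mp (hbot ▸ hkW))
  refine hx (eq_zero_of_forall_mul_ι_eq_zero (hn ▸ hm) (hE₀m hxE₀) fun v => ?_)
  exact mem_rightAnnihilator.mp (hW ▸ Submodule.mem_top) x hxE₀

/-- Let `G = SL₂(ℂ)` act irreducibly on an `n`-dimensional space `E`, let `m < n`,
let `kvec ∈ E` be nonzero, and let `E₀` be a nonzero irreducible `G`-submodule of the
`m`-th exterior power `⋀[ℂ]^m E`. Then the map `x ↦ x ∧ kvec` does not annihilate
`E₀`: there is `x ∈ E₀` with `x ∧ kvec ≠ 0`. -/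
theorem stmt15 {E : Type*} [AddCommGroup E] [Module ℂ E] [FiniteDimensional ℂ E]
    {n : ℕ} (hn : Module.finrank ℂ E = n)
    (ρ : Representation ℂ (Matrix.SpecialLinearGroup (Fin 2) ℂ) E)
    (hirr : ∀ W : Submodule ℂ E,
      (∀ g, W.map (ρ g) = W) → W = ⊥ ∨ W = ⊤)
    (m : ℕ) (hm : m < n)
    (E₀ : Submodule ℂ (ExteriorAlgebra ℂ E)) (hE₀m : E₀ ≤ ⋀[ℂ]^m E)
    (hE₀inv : ∀ g, E₀.map (ExteriorAlgebra.map (ρ g)).toLinearMap = E₀)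
    (hE₀ne : E₀ ≠ ⊥)
    (hE₀irr : ∀ W : Submodule ℂ (ExteriorAlgebra ℂ E), W ≤ E₀ →
      (∀ g, W.map (ExteriorAlgebra.map (ρ g)).toLinearMap = W) → W = ⊥ ∨ W = E₀)
    (kvec : E) (hk : kvec ≠ 0) :
    ∃ x ∈ E₀, x * ExteriorAlgebra.ι ℂ kvec ≠ 0 :=
  stmt15_general hn ρ hirr m hm E₀ hE₀m hE₀inv hE₀ne kvec hk
end

section
/- Let Γ be a finitely generated subgroup of GL_n over a field, and let C be a conjugacy class of GL_n consisting of elements whose semisimple part is not the identity (nonunipotent elements), such that the Zariski closure of C does not contain the identity. Then there exists a finite-index subgroup H ≤ Γ with H ∩ C = ∅. -/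
/-!
The entries of the generators of `Γ` and of their inverses, together with the coefficients of
`p`, generate a finitely generated ring `A ⊆ k`, and `Γ ≤ GL_n(A)`. As `p(1) ≠ 0` in `A` and `A` is
a Jacobson ring, some maximal ideal `m` of `A` misses `p(1)`, and `A ⧸ m` is a finite field. On
the congruence subgroup `ker (GL_n(A) → GL_n(A ⧸ m))`, which has finite index, `p ≡ p(1) mod m`,
so `p` does not vanish there and the subgroup misses `C`.
-/

open Matrix

instance Int.instIsJacobsonRing : IsJacobsonRing ℤ := by
  rw [isJacobsonRing_iff_prime_eq]
  intro P hP
  rcases eq_or_ne P ⊥ with rfl | hP0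
  · refine le_antisymm (fun x hx => ?_) Ideal.le_jacobson
    -- `x * x + 1` is a unit of `ℤ`, hence equal to `1`
    rcases Int.isUnit_iff.mp (Ideal.mem_jacobson_bot.mp hx x) with h | h
    · simpa using h
    · nlinarith [mul_self_nonneg x]
  · have := IsPrime.to_maximal_ideal hP0
    exact Ideal.jacobson_eq_self_of_isMaximal

/-- The field is integral over `ℤ`, so it cannot have characteristic zero; being a finitely
generated torsion group, it is finite. -/
theorem finite_of_finiteType_int (F : Type*) [Field F] [Algebra ℤ F] [Algebra.FiniteType ℤ F] :
    Finite F := by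
  have := finite_of_finite_type_of_isJacobsonRing ℤ F
  have hchar : ringChar F ≠ 0 := by
    intro h
    have : CharZero F := (CharP.ringChar_zero_iff_CharZero F).mp h
    have hinj : Function.Injective (algebraMap ℤ F) := by
      rw [Subsingleton.elim (algebraMap ℤ F) (Int.castRingHom F)]; exact Int.cast_injective
    have := Algebra.IsIntegral.of_finite ℤ F
    exact Int.not_isField (isField_of_isIntegral_of_isField hinj (Field.toIsField F))
  have htors : IsAddTorsion F := fun x =>
    (isOfFinAddOrder_iff_nsmul_eq_zero).mpr ⟨ringChar F, Nat.pos_of_ne_zero hchar,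
      by rw [nsmul_eq_mul, ringChar.Nat.cast_ringChar, zero_mul]⟩
  have : AddGroup.FG F := Module.Finite.iff_addGroup_fg.mp <| by
    convert this <;> first | rfl | exact Subsingleton.elim _ _
  exact AddCommGroup.finite_of_fg_isAddTorsion F htors

universe u in
theorem exists_ringHom_finite_field_apply_ne_zero {R : Type u} [CommRing R] [Algebra ℤ R]
    [Algebra.FiniteType ℤ R] {t : R} (ht : ¬IsNilpotent t) :
    ∃ (F : Type u) (_ : Field F) (_ : Finite F) (φ : R →+* F), φ t ≠ 0 := by
  have : IsJacobsonRing R := isJacobsonRing_of_finiteType (A := ℤ)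
  have ht : t ∉ (nilradical R).jacobson := by
    rw [nilradical, IsJacobsonRing.out' _ (Ideal.radical_isRadical _)]
    exact ht
  obtain ⟨m, -, hm, htm⟩ : ∃ m : Ideal R, nilradical R ≤ m ∧ m.IsMaximal ∧ t ∉ m := by
    simpa [Ideal.jacobson, Submodule.mem_sInf] using ht
  let := Ideal.Quotient.field m
  exact ⟨R ⧸ m, _, finite_of_finiteType_int _, Ideal.Quotient.mk m,
    fun h => htm (Ideal.Quotient.eq_zero_iff_mem.mp h)⟩

theorem Subgroup.relIndex_map_ker_ne_zero {G G' Q : Type*} [Group G] [Group G'] [Group Q]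
    [Finite Q] {ι : G →* G'} (hι : Function.Injective ι) (f : G →* Q) {Γ : Subgroup G'}
    (hΓ : Γ ≤ ι.range) : (f.ker.map ι).relIndex Γ ≠ 0 := by
  rw [← map_comap_eq_self hΓ, relIndex_map_map_of_injective _ _ hι, relIndex_ker]
  exact Nat.card_pos.ne'

namespace Matrix.GeneralLinearGroup

variable {n : Type*} [Fintype n] [DecidableEq n]

theorem map_injective {A B : Type*} [CommRing A] [CommRing B] {f : A →+* B}
    (hf : Function.Injective f) : Function.Injective (map (n := n) f) :=
  fun _ _ h => Units.ext (Matrix.map_injective hf (congrArg Units.val h))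

theorem eval_map_entries {A B : Type*} [CommRing A] [CommRing B] (f : A →+* B) (g : GL n A)
    (q : MvPolynomial (n × n) A) :
    MvPolynomial.eval (fun ij => map f g ij.1 ij.2) (MvPolynomial.map f q) =
      f (MvPolynomial.eval (fun ij => g ij.1 ij.2) q) := by
  rw [MvPolynomial.map_eval]
  rfl

theorem apply_eval_eq_of_mem_ker_map {A B : Type*} [CommRing A] [CommRing B] (φ : A →+* B)
    (q : MvPolynomial (n × n) A) {δ : GL n A} (hδ : δ ∈ (map φ).ker) :
    φ (MvPolynomial.eval (fun ij => δ ij.1 ij.2) q) =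
      φ (MvPolynomial.eval (fun ij => (1 : GL n A) ij.1 ij.2) q) := by
  rw [← eval_map_entries, ← eval_map_entries, hδ, map_one]

theorem mem_range_map_algebraMap {R K : Type*} [CommRing R] [CommRing K] [Algebra R K]
    (A : Subalgebra R K) {g : GL n K} (hg : ∀ i j, g i j ∈ A) (hg' : ∀ i j, g⁻¹ i j ∈ A) :
    g ∈ (map (algebraMap A K)).range := by
  let M : Matrix n n A := Matrix.of fun i j => ⟨g i j, hg i j⟩
  let M' : Matrix n n A := Matrix.of fun i j => ⟨g⁻¹ i j, hg' i j⟩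
  have hinj : Function.Injective ((algebraMap A K).mapMatrix : Matrix n n A → Matrix n n K) :=
    Matrix.map_injective Subtype.val_injective
  have hM : (algebraMap A K).mapMatrix M = g := rfl
  have hM' : (algebraMap A K).mapMatrix M' = g⁻¹ := rfl
  refine ⟨⟨M, M', hinj ?_, hinj ?_⟩, Units.ext hM⟩
  · rw [map_mul, map_one, hM, hM', Units.mul_inv]
  · rw [map_mul, map_one, hM, hM', Units.inv_mul]

end Matrix.GeneralLinearGroup

theorem Subgroup.FG.exists_finiteType_subalgebra_le_range_map {n K : Type*} [Fintype n]
    [DecidableEq n] [CommRing K] {Γ : Subgroup (GL n K)} (hΓ : Γ.FG) {s : Set K}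
    (hs : s.Finite) :
    ∃ A : Subalgebra ℤ K, Algebra.FiniteType ℤ A ∧ s ⊆ A ∧
      Γ ≤ (GeneralLinearGroup.map (algebraMap A K)).range := by
  obtain ⟨S, rfl⟩ := hΓ
  let entries : Set K := ⋃ g ∈ S,
    Set.range (Function.uncurry g.val) ∪ Set.range (Function.uncurry g⁻¹.val)
  have hfin : (s ∪ entries).Finite := hs.union <| S.finite_toSet.biUnion fun _ _ =>
    (Set.finite_range _).union (Set.finite_range _)
  refine ⟨Algebra.adjoin ℤ (s ∪ entries), .adjoin_of_finite hfin,
    fun x hx => Algebra.subset_adjoin (Or.inl hx), (Subgroup.closure_le _).mpr fun g hg => ?_⟩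
  exact GeneralLinearGroup.mem_range_map_algebraMap _
    (fun i j => Algebra.subset_adjoin <| Or.inr <| Set.mem_biUnion hg <| Or.inl ⟨(i, j), rfl⟩)
    (fun i j => Algebra.subset_adjoin <| Or.inr <| Set.mem_biUnion hg <| Or.inr ⟨(i, j), rfl⟩)

theorem stmt18_general {n : ℕ} {k : Type*} [Field k]
    (Γ : Subgroup (GL (Fin n) k)) (hΓ : Γ.FG)
    (C : Set (GL (Fin n) k))
    (hcl : ∃ p : MvPolynomial (Fin n × Fin n) k,
      (∀ g ∈ C, MvPolynomial.eval
          (fun ij => (g : Matrix (Fin n) (Fin n) k) ij.1 ij.2) p = 0) ∧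
      MvPolynomial.eval
          (fun ij => (1 : Matrix (Fin n) (Fin n) k) ij.1 ij.2) p ≠ 0) :
    ∃ H : Subgroup (GL (Fin n) k), H ≤ Γ ∧ H.relIndex Γ ≠ 0 ∧
      (H : Set (GL (Fin n) k)) ∩ C = ∅ := by
  obtain ⟨p, hpC, hp1⟩ := hcl
  obtain ⟨A, hA, hpA, hΓA⟩ :=
    Subgroup.FG.exists_finiteType_subalgebra_le_range_map hΓ p.coeffs.finite_toSet
  obtain ⟨q, rfl⟩ : p ∈ Set.range (MvPolynomial.map (algebraMap A k)) :=
    MvPolynomial.mem_range_map_iff_coeffs_subset.mpr (by simpa using hpA)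
  have hq1 : MvPolynomial.eval (fun ij => (1 : GL (Fin n) A) ij.1 ij.2) q ≠ 0 := by
    intro h
    apply hp1
    rw [← Units.val_one, ← GeneralLinearGroup.map_one (algebraMap A k),
      GeneralLinearGroup.eval_map_entries, h, map_zero]
  obtain ⟨F, _, _, φ, hφ⟩ :=
    exists_ringHom_finite_field_apply_ne_zero (isNilpotent_iff_eq_zero.not.mpr hq1)
  have hι : Function.Injective (GeneralLinearGroup.map (n := Fin n) (algebraMap A k)) :=
    GeneralLinearGroup.map_injective Subtype.val_injective
  refine ⟨Γ ⊓ (GeneralLinearGroup.map φ).ker.map (GeneralLinearGroup.map (algebraMap A k)),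
    inf_le_left, ?_, ?_⟩
  · rw [Subgroup.inf_relIndex_left]
    exact Subgroup.relIndex_map_ker_ne_zero hι _ hΓA
  · refine Set.eq_empty_of_forall_notMem ?_
    rintro _ ⟨⟨-, δ, hδ, rfl⟩, hδC⟩
    have hqδ := hpC _ hδC
    rw [GeneralLinearGroup.eval_map_entries, map_eq_zero_iff _ Subtype.val_injective] at hqδ
    exact hφ (by rw [← GeneralLinearGroup.apply_eval_eq_of_mem_ker_map φ q hδ, hqδ, map_zero])

/-- If `Γ` is a finitely generated subgroup of `GL_n(k)` and `C` is a conjugacy class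
of `GL_n(k)` whose Zariski closure does not contain the identity (witnessed by a
polynomial in the matrix entries vanishing on `C` but not at `1`), then some
finite-index subgroup of `Γ` is disjoint from `C`. -/
theorem stmt18 {n : ℕ} {k : Type*} [Field k]
    (Γ : Subgroup (GL (Fin n) k)) (hΓ : Γ.FG)
    (c : GL (Fin n) k) (C : Set (GL (Fin n) k)) (hC : C = {x | IsConj c x})
    (hcl : ∃ p : MvPolynomial (Fin n × Fin n) k,
      (∀ g ∈ C, MvPolynomial.eval
          (fun ij => (g : Matrix (Fin n) (Fin n) k) ij.1 ij.2) p = 0) ∧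
      MvPolynomial.eval
          (fun ij => (1 : Matrix (Fin n) (Fin n) k) ij.1 ij.2) p ≠ 0) :
    ∃ H : Subgroup (GL (Fin n) k), H ≤ Γ ∧ H.relIndex Γ ≠ 0 ∧
      (H : Set (GL (Fin n) k)) ∩ C = ∅ :=
  stmt18_general Γ hΓ C hcl
end
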